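/- arXiv:1803.05492 — 2 statements merged into one kernel-verified Lean document; each statement's English description precedes it below -/
import Mathlib

section
/- Let f ∈ H²(𝔻) with Taylor coefficients (c_n), so ‖f‖_{H²}² = Σ_{n≥0} |c_n|². For 0 < r < 1 and k ∈ ℕ, define σ_r f(z) = f(rz) and ‖g‖_k := ( (1/k) Σ_{j=0}^{k−1} |g(ω_k^j)|² )^{1/2} with ω_k^j = exp(2πij/k). Then ‖σ_r f‖_k ≤ ‖f‖_{H²} / (1 − r^{2k})^{1/2}. -/
/-
At the points `r ω^j` every exponent of the Taylor series can be reduced mod `k`, so there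
`f` agrees with the polynomial `∑_{m < k} a_m z^m`, `a_m = ∑_l c_{m+kl} r^{m+kl}`. Orthogonality
of the `k`-th roots of unity (discrete Parseval) gives `‖σ_r f‖_k² = ∑_m |a_m|²`, and
Cauchy–Schwarz against the geometric weights `r^{kl}` gives
`|a_m|² ≤ (∑_l |c_{m+kl}|²) / (1 - r^{2k})`; summing over the residues `m` yields the bound.
-/

open Complex

/-- The `j`-th `k`-th root of unity, `exp(2πij/k)`. -/
noncomputable def unitRoot (k j : ℕ) : ℂ :=
  Complex.exp (2 * (Real.pi : ℂ) * Complex.I * (j : ℂ) / (k : ℂ))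

open ComplexConjugate

theorem summable_and_sq_tsum_mul_le_of_nonneg {ι : Type*} {f g : ι → ℝ} (hf : ∀ i, 0 ≤ f i)
    (hg : ∀ i, 0 ≤ g i) (hf2 : Summable fun i => f i ^ 2) (hg2 : Summable fun i => g i ^ 2) :
    (Summable fun i => f i * g i) ∧
      (∑' i, f i * g i) ^ 2 ≤ (∑' i, f i ^ 2) * ∑' i, g i ^ 2 := by
  have holder := Real.summable_and_inner_le_Lp_mul_Lq_tsum_of_nonneg
    Real.HolderConjugate.two_two hf hg (by simpa only [Real.rpow_two])
    (by simpa only [Real.rpow_two])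
  simp only [Real.rpow_two, ← Real.sqrt_eq_rpow] at holder
  refine ⟨holder.1, ?_⟩
  calc (∑' i, f i * g i) ^ 2 ≤ (√(∑' i, f i ^ 2) * √(∑' i, g i ^ 2)) ^ 2 := by
        gcongr
        · exact tsum_nonneg fun i => mul_nonneg (hf i) (hg i)
        · exact holder.2
    _ = _ := by
        rw [mul_pow, Real.sq_sqrt (tsum_nonneg fun i => sq_nonneg _),
          Real.sq_sqrt (tsum_nonneg fun i => sq_nonneg _)]

theorem norm_sq_tsum_mul_le_of_norm_le_pow {b x : ℕ → ℂ} (hb : Summable fun l => ‖b l‖ ^ 2)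
    {ρ : ℝ} (hρ0 : 0 ≤ ρ) (hρ1 : ρ < 1) (hx : ∀ l, ‖x l‖ ≤ ρ ^ l) :
    ‖∑' l, b l * x l‖ ^ 2 ≤ (∑' l, ‖b l‖ ^ 2) / (1 - ρ ^ 2) := by
  have hgeom : HasSum (fun l => (ρ ^ l) ^ 2) (1 - ρ ^ 2)⁻¹ := by
    convert hasSum_geometric_of_lt_one (sq_nonneg ρ) (pow_lt_one₀ hρ0 hρ1 two_ne_zero) using 2
    rw [pow_right_comm]
  obtain ⟨hsum, hCS⟩ := summable_and_sq_tsum_mul_le_of_nonneg (fun l => norm_nonneg (b l))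
    (fun l => pow_nonneg hρ0 l) hb hgeom.summable
  have hnorm : ‖∑' l, b l * x l‖ ≤ ∑' l, ‖b l‖ * ρ ^ l :=
    tsum_of_norm_bounded hsum.hasSum fun l =>
      (norm_mul _ _).trans_le (mul_le_mul_of_nonneg_left (hx l) (norm_nonneg _))
  calc ‖∑' l, b l * x l‖ ^ 2 ≤ (∑' l, ‖b l‖ * ρ ^ l) ^ 2 := by gcongr
    _ ≤ (∑' l, ‖b l‖ ^ 2) * (1 - ρ ^ 2)⁻¹ := hgeom.tsum_eq ▸ hCS

theorem tsum_mul_pow_eq_sum_zmod_of_pow_eq_one {𝕜 : Type*} [NormedField 𝕜] [CompleteSpace 𝕜] {k : ℕ}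
    [NeZero k] {b : ℕ → 𝕜} {ω : 𝕜} (hω : ω ^ k = 1) (hb : Summable fun n => b n * ω ^ n) :
    ∑' n, b n * ω ^ n = ∑ m : ZMod k, (∑' l, b (m.val + k * l)) * ω ^ m.val := by
  rw [Nat.sumByResidueClasses hb k]
  refine Finset.sum_congr rfl fun m _ => ?_
  simp only [pow_add, pow_mul, hω, one_pow, mul_one, tsum_mul_right]

theorem IsPrimitiveRoot.sum_pow_mul_conj_pow {ζ : ℂ} {k : ℕ} (hζ : IsPrimitiveRoot ζ k)
    {m m' : ℕ} (hm : m < k) (hm' : m' < k) :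
    ∑ j : Fin k, (ζ ^ (j : ℕ)) ^ m * conj ((ζ ^ (j : ℕ)) ^ m') = if m = m' then (k : ℂ) else 0 := by
  have hζ0 : ζ ≠ 0 := hζ.ne_zero (by omega)
  have hconj : ∀ n : ℕ, conj (ζ ^ n) = (ζ ^ n)⁻¹ := fun n =>
    (Complex.inv_eq_conj (by rw [norm_pow, hζ.norm'_eq_one (by omega), one_pow])).symm
  set x := ζ ^ m * (ζ ^ m')⁻¹ with hx
  have hterm : ∀ j : ℕ, (ζ ^ j) ^ m * conj ((ζ ^ j) ^ m') = x ^ j := by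
    intro j
    rw [← pow_mul, ← pow_mul, hconj, hx, mul_pow, inv_pow, ← pow_mul, ← pow_mul, mul_comm j m,
      mul_comm j m']
  simp only [hterm]
  rw [Fin.sum_univ_eq_sum_range (x ^ ·)]
  split_ifs with h
  · simp [hx, h, hζ0]
  · have hx1 : x ≠ 1 := fun hx1 =>
      h (hζ.pow_inj hm hm' (by rwa [hx, mul_inv_eq_one₀ (pow_ne_zero _ hζ0)] at hx1))
    have hxk : x ^ k = 1 := by
      rw [hx, mul_pow, inv_pow, ← pow_mul, ← pow_mul, mul_comm m, mul_comm m', pow_mul, pow_mul,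
        hζ.pow_eq_one, one_pow, one_pow, inv_one, mul_one]
    rw [geom_sum_eq hx1, hxk, sub_self, zero_div]

theorem IsPrimitiveRoot.sum_norm_sq_sum_mul_pow {ζ : ℂ} {k : ℕ} [NeZero k]
    (hζ : IsPrimitiveRoot ζ k) (a : ZMod k → ℂ) :
    ∑ j : Fin k, ‖∑ m, a m * (ζ ^ (j : ℕ)) ^ m.val‖ ^ 2 = k * ∑ m, ‖a m‖ ^ 2 := by
  apply Complex.ofReal_injective
  push_cast
  simp only [← Complex.mul_conj']
  calc ∑ j : Fin k, (∑ m, a m * (ζ ^ (j : ℕ)) ^ m.val) * conj (∑ m, a m * (ζ ^ (j : ℕ)) ^ m.val)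
      = ∑ j : Fin k, ∑ m, ∑ m', a m * conj (a m') *
          ((ζ ^ (j : ℕ)) ^ m.val * conj ((ζ ^ (j : ℕ)) ^ m'.val)) := by
        refine Finset.sum_congr rfl fun j _ => ?_
        rw [map_sum, Finset.sum_mul_sum]
        refine Finset.sum_congr rfl fun m _ => Finset.sum_congr rfl fun m' _ => ?_
        rw [map_mul]
        ring
    _ = ∑ m, ∑ m', a m * conj (a m') *
          ∑ j : Fin k, (ζ ^ (j : ℕ)) ^ m.val * conj ((ζ ^ (j : ℕ)) ^ m'.val) := by
        simp only [Finset.mul_sum]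
        rw [Finset.sum_comm]
        exact Finset.sum_congr rfl fun m _ => Finset.sum_comm
    _ = ∑ m, a m * conj (a m) * k := by
        simp only [hζ.sum_pow_mul_conj_pow (ZMod.val_lt _) (ZMod.val_lt _),
          ZMod.val_injective k |>.eq_iff, mul_ite, mul_zero, Finset.sum_ite_eq, Finset.mem_univ,
          if_true]
    _ = k * ∑ m, a m * conj (a m) := by
        rw [← Finset.sum_mul, mul_comm]

theorem unitRoot_eq_pow (k j : ℕ) : unitRoot k j = unitRoot k 1 ^ j := by
  rw [unitRoot, unitRoot, ← Complex.exp_nat_mul]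
  congr 1
  push_cast
  ring

theorem isPrimitiveRoot_unitRoot_one {k : ℕ} (hk : k ≠ 0) : IsPrimitiveRoot (unitRoot k 1) k := by
  simpa [unitRoot] using Complex.isPrimitiveRoot_exp k hk

/-- For `f ∈ H²(𝔻)` with Taylor coefficients `c`, `0 < r < 1` and `k ∈ ℕ`,
the discrete norm of the dilate `σ_r f` satisfies
`‖σ_r f‖_k ≤ ‖f‖_{H²} / (1 - r^{2k})^{1/2}`. -/
theorem dilate_discrete_norm_bound (c : ℕ → ℂ) (hc : Summable fun n => ‖c n‖ ^ 2)
    (f : ℂ → ℂ) (hf : ∀ z : ℂ, ‖z‖ < 1 → HasSum (fun n => c n * z ^ n) (f z))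
    (r : ℝ) (hr0 : 0 < r) (hr1 : r < 1) (k : ℕ) (hk : 0 < k) :
    Real.sqrt ((1 / (k : ℝ)) * ∑ j : Fin k, ‖f ((r : ℂ) * unitRoot k j)‖ ^ 2)
      ≤ Real.sqrt (∑' n, ‖c n‖ ^ 2) / Real.sqrt (1 - r ^ (2 * k)) := by
  have : NeZero k := ⟨hk.ne'⟩
  set ζ := unitRoot k 1
  have hζ : IsPrimitiveRoot ζ k := isPrimitiveRoot_unitRoot_one hk.ne'
  set a : ZMod k → ℂ := fun m => ∑' l, c (m.val + k * l) * (r : ℂ) ^ (m.val + k * l)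
  have hvalue : ∀ j : Fin k, f (r * unitRoot k j) = ∑ m, a m * (ζ ^ (j : ℕ)) ^ m.val := by
    intro j
    have hz : ‖(r : ℂ) * unitRoot k j‖ < 1 := by
      rwa [norm_mul, unitRoot_eq_pow, norm_pow, hζ.norm'_eq_one hk.ne', one_pow, mul_one,
        norm_real, Real.norm_of_nonneg hr0.le]
    have hsum := hf _ hz
    rw [unitRoot_eq_pow] at hsum ⊢
    simp only [mul_pow, ← mul_assoc] at hsum
    rw [← hsum.tsum_eq]
    exact tsum_mul_pow_eq_sum_zmod_of_pow_eq_one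
      (by rw [pow_right_comm, hζ.pow_eq_one, one_pow]) hsum.summable
  have hcoeff : ∀ m : ZMod k,
      ‖a m‖ ^ 2 ≤ (∑' l, ‖c (m.val + k * l)‖ ^ 2) / (1 - r ^ (2 * k)) := by
    intro m
    rw [pow_mul']
    refine norm_sq_tsum_mul_le_of_norm_le_pow (hc.comp_injective fun l₁ l₂ h => ?_)
      (pow_nonneg hr0.le k) (pow_lt_one₀ hr0.le hr1 hk.ne') fun l => ?_
    · simpa [hk.ne'] using h
    · rw [norm_pow, norm_real, Real.norm_of_nonneg hr0.le, ← pow_mul]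
      exact pow_le_pow_of_le_one hr0.le hr1.le (Nat.le_add_left _ _)
  calc √((1 / (k : ℝ)) * ∑ j : Fin k, ‖f ((r : ℂ) * unitRoot k j)‖ ^ 2)
      = √(∑ m, ‖a m‖ ^ 2) := by
        simp only [hvalue, hζ.sum_norm_sq_sum_mul_pow]
        field_simp
    _ ≤ √((∑' n, ‖c n‖ ^ 2) / (1 - r ^ (2 * k))) := by
        gcongr
        rw [Nat.sumByResidueClasses hc k, Finset.sum_div]
        exact Finset.sum_le_sum fun m _ => hcoeff m
    _ = _ := Real.sqrt_div' _ (sub_nonneg.2 (pow_le_one₀ hr0.le hr1.le))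
end

section
/- Every Duffin–Schaeffer frame (f_n) for a Hilbert space H is a representing system: if A‖f‖² ≤ Σ |⟨f, f_n⟩|² ≤ B‖f‖² for all f ∈ H with 0 < A ≤ B, then every f ∈ H can be written f = Σ x_n f_n with (x_n) ∈ ℓ², the series converging in H. -/
/-!
The analysis operator `T v = (⟪fₙ, v⟫)ₙ` maps `H` boundedly into `ℓ²`, and its adjoint sends
`x ∈ ℓ²` to `Σ xₙ fₙ`. The lower frame bound says `A‖v‖² ≤ ‖T v‖² = re ⟪T†T v, v⟫`, so the frame
operator `T†T` is coercive, hence surjective (closed range with trivial orthogonal complement).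
Then every `v` is `T†x` with `x = T u` for some `u`.
-/

open scoped InnerProductSpace InnerProduct lp

section Coercive

variable {𝕜 E F : Type*} [RCLike 𝕜] [NormedAddCommGroup E] [InnerProductSpace 𝕜 E]
  [NormedAddCommGroup F] [InnerProductSpace 𝕜 F]

open RCLike in
theorem ContinuousLinearMap.surjective_of_coercive [CompleteSpace E] (S : E →L[𝕜] E) {c : ℝ}
    (hc : 0 < c) (hS : ∀ v, c * ‖v‖ ^ 2 ≤ re ⟪S v, v⟫_𝕜) : Function.Surjective S := by
  have hbelow : ∀ v, c * ‖v‖ ≤ ‖S v‖ := by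
    intro v
    rcases (norm_nonneg v).eq_or_lt with hv | hv
    · simp [← hv]
    refine le_of_mul_le_mul_right ?_ hv
    calc c * ‖v‖ * ‖v‖ = c * ‖v‖ ^ 2 := by ring
      _ ≤ re ⟪S v, v⟫_𝕜 := hS v
      _ ≤ ‖S v‖ * ‖v‖ := re_inner_le_norm _ _
  have hanti : AntilipschitzWith c⁻¹.toNNReal S := by
    refine S.antilipschitz_of_bound fun v => ?_
    rw [Real.coe_toNNReal _ (inv_pos.mpr hc).le, ← div_eq_inv_mul, le_div_iff₀' hc]
    exact hbelow v
  have : CompleteSpace S.range :=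
    (hanti.isClosed_range S.uniformContinuous).completeSpace_coe
  rw [← S.coe_coe, ← LinearMap.range_eq_top, ← Submodule.orthogonal_eq_bot_iff,
    Submodule.eq_bot_iff]
  intro w hw
  have hw0 : ⟪S w, w⟫_𝕜 = 0 := (Submodule.mem_orthogonal _ w).mp hw _ ⟨w, rfl⟩
  by_contra hne
  have := hS w
  rw [hw0, map_zero] at this
  linarith [mul_pos hc (pow_pos (norm_pos_iff.mpr hne) 2)]

theorem ContinuousLinearMap.adjoint_surjective_of_bounded_below [CompleteSpace E]
    [CompleteSpace F] (T : E →L[𝕜] F) {c : ℝ} (hc : 0 < c)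
    (hT : ∀ v, c * ‖v‖ ^ 2 ≤ ‖T v‖ ^ 2) : Function.Surjective T.adjoint :=
  .of_comp <| (T† ∘L T).surjective_of_coercive hc fun v =>
    T.apply_norm_sq_eq_inner_adjoint_left v ▸ hT v

end Coercive

section AnalysisOperator

variable {𝕜 E ι : Type*} [RCLike 𝕜] [NormedAddCommGroup E] [InnerProductSpace 𝕜 E]

theorem lp.norm_sq_eq_tsum {F : ι → Type*} [∀ i, NormedAddCommGroup (F i)] (x : lp F 2) :
    ‖x‖ ^ 2 = ∑' i, ‖x i‖ ^ 2 := by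
  simpa using lp.norm_rpow_eq_tsum (p := 2) (by norm_num) x

theorem lp.summable_norm_sq {F : ι → Type*} [∀ i, NormedAddCommGroup (F i)] (x : lp F 2) :
    Summable fun i => ‖x i‖ ^ 2 := by
  simpa using (memℓp_gen_iff (p := 2) (by norm_num)).mp (lp.memℓp x)

variable (f : ι → E) {B : ℝ} (hsum : ∀ v, Summable fun i => ‖⟪v, f i⟫_𝕜‖ ^ 2)
  (hB : ∀ v, ∑' i, ‖⟪v, f i⟫_𝕜‖ ^ 2 ≤ B * ‖v‖ ^ 2)

noncomputable def analysisOperator : E →L[𝕜] ℓ²(ι, 𝕜) :=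
  LinearMap.mkContinuous
    { toFun v := ⟨fun i => ⟪f i, v⟫_𝕜, memℓp_gen <| by simpa [norm_inner_symm] using hsum v⟩
      map_add' v w := by ext i; exact inner_add_right _ _ _
      map_smul' c v := by ext i; exact inner_smul_right _ _ _ }
    √B fun v => calc
      _ ≤ √(B * ‖v‖ ^ 2) := by
        rw [← Real.sqrt_sq (norm_nonneg _), lp.norm_sq_eq_tsum]
        exact Real.sqrt_le_sqrt (by simpa [norm_inner_symm] using hB v)
      _ = √B * ‖v‖ := by rw [Real.sqrt_mul' _ (sq_nonneg _), Real.sqrt_sq (norm_nonneg _)]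

@[simp]
theorem analysisOperator_apply (v : E) (i : ι) : analysisOperator f hsum hB v i = ⟪f i, v⟫_𝕜 :=
  rfl

theorem norm_analysisOperator_sq (v : E) :
    ‖analysisOperator f hsum hB v‖ ^ 2 = ∑' i, ‖⟪v, f i⟫_𝕜‖ ^ 2 := by
  simp [lp.norm_sq_eq_tsum, norm_inner_symm]

variable [CompleteSpace E]

theorem adjoint_analysisOperator_single [DecidableEq ι] (i : ι) (a : 𝕜) :
    (analysisOperator f hsum hB).adjoint (lp.single 2 i a) = a • f i := by
  refine ext_inner_right 𝕜 fun w => ?_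
  rw [ContinuousLinearMap.adjoint_inner_left, lp.inner_single_left, analysisOperator_apply,
    inner_smul_left]
  exact RCLike.inner_apply' (𝕜 := 𝕜) _ _

theorem hasSum_adjoint_analysisOperator (x : ℓ²(ι, 𝕜)) :
    HasSum (fun i => x i • f i) ((analysisOperator f hsum hB).adjoint x) := by
  classical
  simpa [adjoint_analysisOperator_single] using
    (analysisOperator f hsum hB).adjoint.hasSum
      (lp.hasSum_single ENNReal.ofNat_ne_top x)

end AnalysisOperator

theorem duffin_schaeffer_frame_representing_general
    {H : Type*} [NormedAddCommGroup H] [InnerProductSpace ℂ H] [CompleteSpace H]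
    (f : ℕ → H)
    (A B : ℝ) (hA : 0 < A)
    (hsum : ∀ v : H, Summable fun n => ‖(inner ℂ v (f n) : ℂ)‖ ^ 2)
    (hframe : ∀ v : H,
      A * ‖v‖ ^ 2 ≤ (∑' n, ‖(inner ℂ v (f n) : ℂ)‖ ^ 2) ∧
      (∑' n, ‖(inner ℂ v (f n) : ℂ)‖ ^ 2) ≤ B * ‖v‖ ^ 2) :
    ∀ v : H, ∃ x : ℕ → ℂ,
      Summable (fun n => ‖x n‖ ^ 2) ∧ HasSum (fun n => x n • f n) v := by
  intro v
  have hB (w : H) := (hframe w).2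
  obtain ⟨x, rfl⟩ := (analysisOperator f hsum hB).adjoint_surjective_of_bounded_below hA
    (fun w => norm_analysisOperator_sq f hsum hB w ▸ (hframe w).1) v
  exact ⟨x, lp.summable_norm_sq x, hasSum_adjoint_analysisOperator f hsum hB x⟩

/-- Every Duffin–Schaeffer frame for a Hilbert space is a representing system:
every `v` can be written as `Σ xₙ fₙ` with `(xₙ) ∈ ℓ²`, converging in `H`. -/
theorem duffin_schaeffer_frame_representing
    {H : Type*} [NormedAddCommGroup H] [InnerProductSpace ℂ H] [CompleteSpace H]
    (f : ℕ → H) (hf : ∀ n, f n ≠ 0)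
    (A B : ℝ) (hA : 0 < A) (hAB : A ≤ B)
    (hsum : ∀ v : H, Summable fun n => ‖(inner ℂ v (f n) : ℂ)‖ ^ 2)
    (hframe : ∀ v : H,
      A * ‖v‖ ^ 2 ≤ (∑' n, ‖(inner ℂ v (f n) : ℂ)‖ ^ 2) ∧
      (∑' n, ‖(inner ℂ v (f n) : ℂ)‖ ^ 2) ≤ B * ‖v‖ ^ 2) :
    ∀ v : H, ∃ x : ℕ → ℂ,
      Summable (fun n => ‖x n‖ ^ 2) ∧ HasSum (fun n => x n • f n) v :=
  duffin_schaeffer_frame_representing_general f A B hA hsum hframe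
end
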